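/- Let Φ be an irreducible reduced root system, ρ half the sum of the positive roots, and α̃ the highest root. Set d_min = ⟨ρ, α̃∨⟩. Then for every positive root β and every subset S ⊂ Φ⁺, the vector Σ_{α ∈ Φ⁺ \ S} α − (d_min − |S|)·β lies in the cone of nonnegative real combinations of positive roots. -/

import Mathlib

open RealInnerProductSpace

/-- A reduced crystallographic root system `Φ` in a real inner product space,
together with a base `Δ` (set of simple roots), so that every root is either a
nonnegative or a nonpositive combination of the simple roots. -/
structure RootSystemBase (V : Type*) [NormedAddCommGroup V] [InnerProductSpace ℝ V] where
  /-- the (finite) set of roots -/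
  Φ : Finset V
  /-- the base (set of simple roots) -/
  Δ : Finset V
  ne_zero : ∀ α ∈ Φ, α ≠ (0 : V)
  base_sub : Δ ⊆ Φ
  /-- `Φ` is stable under the reflection in each root -/
  reflect_mem : ∀ α ∈ Φ, ∀ β ∈ Φ, β - (2 * ⟪β, α⟫ / ⟪α, α⟫) • α ∈ Φ
  /-- crystallographic condition: all Cartan pairings are integers -/
  crystal : ∀ α ∈ Φ, ∀ β ∈ Φ, ∃ n : ℤ, 2 * ⟪β, α⟫ / ⟪α, α⟫ = (n : ℝ)
  /-- reduced: the only multiples of a root which are roots are `±` itself -/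
  reduced : ∀ α ∈ Φ, ∀ t : ℝ, t • α ∈ Φ → t = 1 ∨ t = -1
  base_indep : LinearIndependent ℝ (Subtype.val : {x // x ∈ Δ} → V)
  /-- every root is a nonnegative or nonpositive combination of simple roots -/
  pos_or_neg : ∀ α ∈ Φ,
    (∃ c : V → ℝ, (∀ d, 0 ≤ c d) ∧ α = ∑ d ∈ Δ, c d • d) ∨
    (∃ c : V → ℝ, (∀ d, 0 ≤ c d) ∧ α = -(∑ d ∈ Δ, c d • d))

namespace RootSystemBase

variable {V : Type*} [NormedAddCommGroup V] [InnerProductSpace ℝ V]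

/-- `α` is a positive root: a root which is a nonnegative combination of simple roots. -/
def IsPos (R : RootSystemBase V) (α : V) : Prop :=
  α ∈ R.Φ ∧ ∃ c : V → ℝ, (∀ d, 0 ≤ c d) ∧ α = ∑ d ∈ R.Δ, c d • d

/-- `α` is a negative root: a root which is a nonpositive combination of simple roots. -/
def IsNeg (R : RootSystemBase V) (α : V) : Prop :=
  α ∈ R.Φ ∧ ∃ c : V → ℝ, (∀ d, 0 ≤ c d) ∧ α = -(∑ d ∈ R.Δ, c d • d)

/-- `δ ≺ α` : the simple root `δ` occurs with positive coefficient in `α`. -/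
def Prec (R : RootSystemBase V) (δ α : V) : Prop :=
  ∃ c : V → ℝ, (∀ d, 0 ≤ c d) ∧ α = ∑ d ∈ R.Δ, c d • d ∧ 0 < c δ

end RootSystemBase

open scoped Classical

/-! Write `s` for the reflection in `α̃` and `2ρ = ∑_{γ ∈ Φ⁺} γ`, so that
`2ρ - d_min α̃ = ½ (2ρ + s (2ρ)) = ½ ∑_{γ ∈ Φ⁺} (γ + s γ)`. The terms with `s γ < 0` cancel, since
`-s` permutes these roots, and every other term is a sum of two positive roots. If `d_min ≤ |S|`
the claim is clear; otherwise the vector is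
`(2ρ - d_min α̃) + ∑_{γ ∈ S} (α̃ - γ) + (d_min - |S|) (α̃ - β)`, and `α̃ - γ` is a nonnegative
combination of simple roots for every positive root `γ`. -/

namespace RootSystemBase

variable {V : Type*} [NormedAddCommGroup V] [InnerProductSpace ℝ V] (R : RootSystemBase V)

lemma neg_mem_Φ {α : V} (hα : α ∈ R.Φ) : -α ∈ R.Φ := by
  have h := R.reflect_mem α hα α hα
  rwa [mul_div_assoc, div_self (inner_self_ne_zero.mpr (R.ne_zero α hα)), mul_one,
    two_smul, sub_add_cancel_left] at h

lemma not_isPos_neg {γ : V} (hγ : R.IsPos γ) : ¬ R.IsPos (-γ) := by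
  rintro ⟨-, c', hc', hneg⟩
  obtain ⟨hγΦ, c, hc, hpos⟩ := hγ
  have hsum : ∑ d : R.Δ, (c d + c' d) • (d : V) = 0 := by
    rw [Finset.sum_coe_sort R.Δ (fun d => (c d + c' d) • d)]
    simp only [add_smul, Finset.sum_add_distrib, ← hpos, ← hneg, add_neg_cancel]
  have hzero := Fintype.linearIndependent_iff.mp R.base_indep _ hsum
  refine R.ne_zero γ hγΦ (hpos.trans (Finset.sum_eq_zero fun d hd => ?_))
  have := hzero ⟨d, hd⟩
  rw [le_antisymm (by linarith [hc' d]) (hc d), zero_smul]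

lemma isPos_neg_of_not_isPos {γ : V} (hγ : γ ∈ R.Φ) (h : ¬ R.IsPos γ) : R.IsPos (-γ) := by
  rcases R.pos_or_neg γ hγ with hpos | ⟨c, hc, rfl⟩
  · exact absurd ⟨hγ, hpos⟩ h
  · exact ⟨R.neg_mem_Φ hγ, c, hc, neg_neg _⟩

lemma isPos_of_mem_Δ {d : V} (hd : d ∈ R.Δ) : R.IsPos d := by
  refine ⟨R.base_sub hd, Pi.single d 1, fun x => ?_, ?_⟩
  · by_cases h : x = d <;> simp [h]
  · rw [Finset.sum_eq_single_of_mem d hd fun b _ hb => by simp [hb]]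
    simp

noncomputable def posRoots : Finset V := R.Φ.filter (fun γ => R.IsPos γ)

@[simp]
lemma mem_posRoots {γ : V} : γ ∈ R.posRoots ↔ R.IsPos γ :=
  Finset.mem_filter.trans (and_iff_right_of_imp And.left)

def posCone : PointedCone ℝ V := PointedCone.hull ℝ (R.posRoots : Set V)

lemma mem_posCone_of_isPos {γ : V} (hγ : R.IsPos γ) : γ ∈ R.posCone :=
  PointedCone.subset_hull ((R.mem_posRoots).mpr hγ)

lemma mem_posCone_iff {v : V} :
    v ∈ R.posCone ↔ ∃ c : V → ℝ, (∀ γ, 0 ≤ c γ) ∧ v = ∑ γ ∈ R.posRoots, c γ • γ := by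
  constructor
  · intro hv
    obtain ⟨f, -, rfl⟩ := Submodule.mem_span_finset.mp hv
    exact ⟨fun γ => f γ, fun γ => (f γ).2, rfl⟩
  · rintro ⟨c, hc, rfl⟩
    exact Submodule.sum_mem _ fun γ hγ =>
      R.posCone.smul_mem (hc γ) (R.mem_posCone_of_isPos ((R.mem_posRoots).mp hγ))

lemma sum_smul_Δ_mem_posCone {c : V → ℝ} (hc : ∀ d, 0 ≤ c d) :
    ∑ d ∈ R.Δ, c d • d ∈ R.posCone :=
  Submodule.sum_mem _ fun d hd =>
    R.posCone.smul_mem (hc d) (R.mem_posCone_of_isPos (R.isPos_of_mem_Δ hd))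

noncomputable def coroot (α : V) : Module.Dual ℝ V := (2 / ⟪α, α⟫) • innerₛₗ ℝ α

lemma coroot_apply (α β : V) : coroot α β = 2 * ⟪β, α⟫ / ⟪α, α⟫ := by
  simp only [coroot, LinearMap.smul_apply, innerₛₗ_apply_apply, smul_eq_mul, real_inner_comm β]
  ring

lemma coroot_apply_self {α : V} (hα : α ≠ 0) : coroot α α = 2 := by
  rw [coroot_apply, mul_div_assoc, div_self (inner_self_ne_zero.mpr hα), mul_one]

noncomputable def reflect (α : V) : V →ₗ[ℝ] V := Module.preReflection α (coroot α)

lemma reflect_apply (α β : V) : reflect α β = β - (2 * ⟪β, α⟫ / ⟪α, α⟫) • α := by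
  rw [reflect, Module.preReflection_apply, coroot_apply]

lemma reflect_reflect {α : V} (hα : α ≠ 0) (β : V) : reflect α (reflect α β) = β :=
  Module.involutive_preReflection (coroot_apply_self hα) β

lemma reflect_mem_Φ {α β : V} (hα : α ∈ R.Φ) (hβ : β ∈ R.Φ) : reflect α β ∈ R.Φ := by
  rw [reflect_apply]
  exact R.reflect_mem α hα β hβ

lemma sum_add_reflect_of_not_isPos_eq_zero {α : V} (hα : α ∈ R.Φ) :
    ∑ γ ∈ R.posRoots.filter (fun γ => ¬ R.IsPos (reflect α γ)), (γ + reflect α γ) = 0 := by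
  set N := R.posRoots.filter (fun γ => ¬ R.IsPos (reflect α γ))
  have hmaps : ∀ γ ∈ N, -reflect α γ ∈ N := by
    intro γ hγ
    simp only [N, Finset.mem_filter, mem_posRoots, map_neg, reflect_reflect (R.ne_zero α hα)]
      at hγ ⊢
    exact ⟨R.isPos_neg_of_not_isPos (R.reflect_mem_Φ hα hγ.1.1) hγ.2, R.not_isPos_neg hγ.1⟩
  have hinv : ∀ γ ∈ N, -reflect α (-reflect α γ) = γ := fun γ _ => by
    rw [map_neg, neg_neg, reflect_reflect (R.ne_zero α hα)]
  have hperm : ∑ γ ∈ N, -reflect α γ = ∑ γ ∈ N, γ :=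
    Finset.sum_nbij' _ _ hmaps hmaps hinv hinv fun _ _ => rfl
  rw [Finset.sum_add_distrib, ← neg_neg (∑ γ ∈ N, reflect α γ), ← Finset.sum_neg_distrib, hperm,
    add_neg_cancel]

theorem sum_posRoots_sub_smul_mem_posCone {α : V} (hα : α ∈ R.Φ) :
    ∑ γ ∈ R.posRoots, γ - (⟪∑ γ ∈ R.posRoots, γ, α⟫ / ⟪α, α⟫) • α ∈ R.posCone := by
  have hsplit : ∑ γ ∈ R.posRoots, γ - (⟪∑ γ ∈ R.posRoots, γ, α⟫ / ⟪α, α⟫) • α =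
      (2 : ℝ)⁻¹ • ∑ γ ∈ R.posRoots.filter (fun γ => R.IsPos (reflect α γ)), (γ + reflect α γ) := by
    rw [← add_zero (∑ γ ∈ R.posRoots.filter _, _), ← R.sum_add_reflect_of_not_isPos_eq_zero hα,
      Finset.sum_filter_add_sum_filter_not, Finset.sum_add_distrib, ← map_sum, reflect_apply]
    module
  rw [hsplit]
  refine R.posCone.smul_mem (by norm_num) (Submodule.sum_mem _ fun γ hγ => ?_)
  rw [Finset.mem_filter, mem_posRoots] at hγ
  exact add_mem (R.mem_posCone_of_isPos hγ.1) (R.mem_posCone_of_isPos hγ.2)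

theorem sum_sdiff_sub_smul_mem_posCone {α β : V} {S : Finset V} (hα : α ∈ R.Φ)
    (hhigh : ∀ γ, R.IsPos γ → α - γ ∈ R.posCone) (hβ : R.IsPos β) (hS : S ⊆ R.posRoots) :
    ∑ γ ∈ R.posRoots \ S, γ - (⟪∑ γ ∈ R.posRoots, γ, α⟫ / ⟪α, α⟫ - S.card) • β ∈ R.posCone := by
  set d := ⟪∑ γ ∈ R.posRoots, γ, α⟫ / ⟪α, α⟫
  have hsdiff : ∑ γ ∈ R.posRoots \ S, γ ∈ R.posCone :=
    Submodule.sum_mem _ fun γ hγ =>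
      R.mem_posCone_of_isPos ((R.mem_posRoots).mp (Finset.mem_sdiff.mp hγ).1)
  rcases le_total d S.card with hle | hge
  · rw [sub_eq_add_neg, ← neg_smul, neg_sub]
    exact add_mem hsdiff (R.posCone.smul_mem (sub_nonneg.mpr hle) (R.mem_posCone_of_isPos hβ))
  · have hdecomp : ∑ γ ∈ R.posRoots \ S, γ - (d - S.card) • β =
        (∑ γ ∈ R.posRoots, γ - d • α) + ∑ γ ∈ S, (α - γ) + (d - S.card) • (α - β) := by
      rw [← Finset.sum_sdiff hS, Finset.sum_sub_distrib, Finset.sum_const,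
        ← Nat.cast_smul_eq_nsmul ℝ]
      module
    rw [hdecomp]
    refine add_mem (add_mem (R.sum_posRoots_sub_smul_mem_posCone hα) ?_) ?_
    · exact Submodule.sum_mem _ fun γ hγ => hhigh γ ((R.mem_posRoots).mp (hS hγ))
    · exact R.posCone.smul_mem (sub_nonneg.mpr hge) (hhigh β hβ)

end RootSystemBase

/-- Let `ρ` be half the sum of the positive roots, `α̃` the highest root (i.e. `α̃ − β`
is a nonnegative combination of simple roots for every positive root `β`), and
`d_min = ⟨ρ, α̃∨⟩`. Then for every positive root `β` and every subset `S` of the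
positive roots, `Σ_{α ∈ Φ⁺ \ S} α − (d_min − |S|)·β` is a nonnegative combination of
positive roots. -/
theorem sum_pos_roots_sub_dmin_mem_cone {V : Type*} [NormedAddCommGroup V]
    [InnerProductSpace ℝ V] (R : RootSystemBase V)
    (tα : V) (htα : R.IsPos tα)
    (hhigh : ∀ β : V, R.IsPos β →
      ∃ c : V → ℝ, (∀ d, 0 ≤ c d) ∧ tα - β = ∑ d ∈ R.Δ, c d • d)
    (β : V) (hβ : R.IsPos β) (S : Finset V)
    (hS : S ⊆ R.Φ.filter (fun γ => R.IsPos γ)) :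
    ∃ c : V → ℝ, (∀ γ, 0 ≤ c γ) ∧
      (∑ γ ∈ R.Φ.filter (fun γ => R.IsPos γ) \ S, γ)
          - ((2 * ⟪(2 : ℝ)⁻¹ • ∑ γ ∈ R.Φ.filter (fun γ => R.IsPos γ), γ, tα⟫ / ⟪tα, tα⟫)
              - (S.card : ℝ)) • β
        = ∑ γ ∈ R.Φ.filter (fun γ => R.IsPos γ), c γ • γ := by
  have hhigh_cone : ∀ γ, R.IsPos γ → tα - γ ∈ R.posCone := fun γ hγ => by
    obtain ⟨c, hc, h⟩ := hhigh γ hγ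
    exact h ▸ R.sum_smul_Δ_mem_posCone hc
  have hdmin : ∀ x : V, 2 * ⟪(2 : ℝ)⁻¹ • x, tα⟫ / ⟪tα, tα⟫ = ⟪x, tα⟫ / ⟪tα, tα⟫ := fun x => by
    rw [real_inner_smul_left]; ring
  rw [hdmin]
  exact (R.mem_posCone_iff).mp (R.sum_sdiff_sub_smul_mem_posCone htα.1 hhigh_cone hβ hS)
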